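/- arXiv:1903.11582 — 2 statements merged into one kernel-verified Lean document; each statement's English description precedes it below -/
import Mathlib

section
/- In the discrete balance-point setting, the map j ↦ aver(i*(j), j) satisfies: (1) aver(i*(j), j) > aver(i*(j+1), j+1) for every j with k₂ ≤ j < j*; (2) aver(i*(j), j) ≤ a_{j+1} for every j with j* ≤ j ≤ k₃ − 1; (3) aver(i*(j), j) ≤ aver(i*(j+1), j+1) for every j with j* ≤ j ≤ k₃ − 1. -/
/-!
For `j ≥ k₁` the left balance point `i*(j)` maximizes `i ↦ aver(i, j)` over `1 ≤ i ≤ k₁`: since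
`aver(i, j)` is a weighted mean of `a_i` and `aver(i+1, j)`, the averages increase up to `i*(j)`,
and beyond it they decrease because `a` is nondecreasing on `[1, k₁]`. Write
`M(j) = aver(i*(j), j)`. As `aver(i, j+1)` is a weighted mean of `aver(i, j) ≤ M(j)` and `a_{j+1}`,
`M(j+1) < M(j)` when `a_{j+1} < M(j)`, while `M(j) ≤ M(j+1) ≤ a_{j+1}` when `M(j) ≤ a_{j+1}`.
On `[k₂, k₃]`, where `a` is nondecreasing, the latter condition therefore persists once it holds;
by the choice of `j*` it holds from `j*` on and fails at `j* - 1`, hence everywhere on `[k₂, j*)`.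
-/

open Finset

/-- `aver a i j = (∑_{l=i}^j a_l)/(j − i + 1)`. -/
noncomputable def aver (a : ℕ → ℝ) (i j : ℕ) : ℝ :=
  (∑ l ∈ Finset.Icc i j, a l) / ((j : ℝ) - (i : ℝ) + 1)

open Classical in
/-- The left balance point `i*(j)`. -/
noncomputable def istar (a : ℕ → ℝ) (k₁ j : ℕ) : ℕ :=
  if h : ((Finset.Icc 2 k₁).filter fun i => aver a i j < a (i - 1)).Nonempty
  then ((Finset.Icc 2 k₁).filter fun i => aver a i j < a (i - 1)).min' h - 1
  else k₁

open Classical in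
/-- The right balance point `j*`. -/
noncomputable def jstar (a : ℕ → ℝ) (k₁ k₂ k₃ : ℕ) : ℕ :=
  if h : ((Finset.Icc k₂ (k₃ - 1)).filter fun j => a (j + 1) < aver a (istar a k₁ j) j).Nonempty
  then ((Finset.Icc k₂ (k₃ - 1)).filter fun j => a (j + 1) < aver a (istar a k₁ j) j).max' h + 1
  else k₂

section Aver

variable (a : ℕ → ℝ) {i j : ℕ}

lemma aver_mul_eq_add_aver_succ_left (h : i < j) :
    aver a i j * ((j : ℝ) - i + 1) = a i + ((j : ℝ) - i) * aver a (i + 1) j := by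
  have hij : (i : ℝ) + 1 ≤ j := by exact_mod_cast h
  rw [aver, aver, ← insert_Icc_add_one_left_eq_Icc h.le, sum_insert (by simp)]
  rw [Nat.cast_add_one, show (j : ℝ) - (i + 1) + 1 = j - i by ring]
  field_simp [show (j : ℝ) - i + 1 ≠ 0 by linarith, show (j : ℝ) - i ≠ 0 by linarith]

lemma aver_succ_right_mul (h : i ≤ j) :
    aver a i (j + 1) * ((j : ℝ) - i + 2) = aver a i j * ((j : ℝ) - i + 1) + a (j + 1) := by
  have hij : (i : ℝ) ≤ j := by exact_mod_cast h
  rw [aver, aver, sum_Icc_succ_top (by omega)]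
  push_cast
  field_simp [show (j : ℝ) - i + 1 ≠ 0 by linarith, show (j : ℝ) + 1 - i + 1 ≠ 0 by linarith]
  ring

variable {a}

lemma aver_le_aver_succ_left_iff (h : i < j) :
    aver a i j ≤ aver a (i + 1) j ↔ a i ≤ aver a (i + 1) j := by
  have hij : (i : ℝ) + 1 ≤ j := by exact_mod_cast h
  have key := aver_mul_eq_add_aver_succ_left a h
  constructor <;> intro <;> nlinarith

lemma le_aver_iff_le_aver_succ_left (h : i < j) :
    a i ≤ aver a i j ↔ a i ≤ aver a (i + 1) j := by
  have hij : (i : ℝ) + 1 ≤ j := by exact_mod_cast h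
  have key := aver_mul_eq_add_aver_succ_left a h
  constructor <;> intro <;> nlinarith

lemma aver_le_aver_succ_right_iff (h : i ≤ j) :
    aver a i j ≤ aver a i (j + 1) ↔ aver a i j ≤ a (j + 1) := by
  have hij : (i : ℝ) ≤ j := by exact_mod_cast h
  have key := aver_succ_right_mul a h
  constructor <;> intro <;> nlinarith

lemma aver_succ_right_le {c : ℝ} (h : i ≤ j) (hi : aver a i j ≤ c) (hj : a (j + 1) ≤ c) :
    aver a i (j + 1) ≤ c := by
  have hij : (i : ℝ) ≤ j := by exact_mod_cast h
  have key := aver_succ_right_mul a h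
  nlinarith

lemma aver_succ_right_lt {c : ℝ} (h : i ≤ j) (hi : aver a i j ≤ c) (hj : a (j + 1) < c) :
    aver a i (j + 1) < c := by
  have hij : (i : ℝ) ≤ j := by exact_mod_cast h
  have key := aver_succ_right_mul a h
  nlinarith

end Aver

section LeftBalancePoint

variable {a : ℕ → ℝ} {k₁ j : ℕ}

lemma istar_le : istar a k₁ j ≤ k₁ := by
  unfold istar
  split_ifs with hne
  · have := (mem_Icc.mp (mem_filter.mp (min'_mem _ hne)).1).2
    omega
  · exact le_rfl

lemma one_le_istar (hk₁ : 1 ≤ k₁) : 1 ≤ istar a k₁ j := by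
  unfold istar
  split_ifs with hne
  · have := (mem_Icc.mp (mem_filter.mp (min'_mem _ hne)).1).1
    omega
  · exact hk₁

lemma le_aver_of_lt_istar {i : ℕ} (hi : 1 ≤ i) (h : i < istar a k₁ j) :
    a i ≤ aver a (i + 1) j := by
  by_contra! hlt
  have hik : i + 1 ≤ k₁ := h.trans_le istar_le
  have hmem : i + 1 ∈ (Icc 2 k₁).filter fun i => aver a i j < a (i - 1) :=
    mem_filter.mpr ⟨mem_Icc.mpr ⟨by omega, hik⟩, hlt⟩
  have hne : ((Icc 2 k₁).filter fun i => aver a i j < a (i - 1)).Nonempty := ⟨_, hmem⟩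
  rw [istar, dif_pos hne] at h
  have := min'_le _ _ hmem
  omega

lemma aver_istar_add_one_lt (h : istar a k₁ j < k₁) :
    aver a (istar a k₁ j + 1) j < a (istar a k₁ j) := by
  by_cases hne : ((Icc 2 k₁).filter fun i => aver a i j < a (i - 1)).Nonempty
  · have hmem := mem_filter.mp (min'_mem _ hne)
    have h2 := (mem_Icc.mp hmem.1).1
    rw [istar, dif_pos hne, Nat.sub_add_cancel (by omega)]
    exact hmem.2
  · rw [istar, dif_neg hne] at h
    exact absurd h (lt_irrefl k₁)

lemma aver_le_aver_istar_of_le (hj : k₁ ≤ j) {i : ℕ} (hi : 1 ≤ i) (h : i ≤ istar a k₁ j) :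
    aver a i j ≤ aver a (istar a k₁ j) j := by
  suffices ∀ n, i ≤ n → n ≤ istar a k₁ j → aver a i j ≤ aver a n j from this _ h le_rfl
  intro n hn
  induction n, hn using Nat.le_induction with
  | base => exact fun _ => le_rfl
  | succ n hin ih =>
    intro hn
    have hnj : n < j := (Nat.lt_of_succ_le hn).trans_le (istar_le.trans hj)
    exact (ih (by omega)).trans <|
      (aver_le_aver_succ_left_iff hnj).2 (le_aver_of_lt_istar (hi.trans hin) hn)

lemma aver_le_aver_istar_of_ge (hk₁ : 1 ≤ k₁)
    (hmono1 : ∀ i, 1 ≤ i → i + 1 ≤ k₁ → a i ≤ a (i + 1)) (hj : k₁ ≤ j) {i : ℕ}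
    (h : istar a k₁ j ≤ i) (hi : i ≤ k₁) :
    aver a i j ≤ aver a (istar a k₁ j) j := by
  -- `i*(j) + 1 = min I_j`, and membership in `I_j` propagates rightwards as `a` is nondecreasing.
  have hdrop : ∀ n, istar a k₁ j ≤ n → n < k₁ → aver a (n + 1) j < a n := by
    intro n hn
    induction n, hn using Nat.le_induction with
    | base => exact aver_istar_add_one_lt
    | succ n hin ih =>
      intro hn
      by_contra! hle
      have hstep := hmono1 n ((one_le_istar hk₁).trans hin) hn.le
      have := (le_aver_iff_le_aver_succ_left (by omega)).2 hle
      linarith [ih (by omega)]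
  suffices ∀ n, istar a k₁ j ≤ n → n ≤ k₁ → aver a n j ≤ aver a (istar a k₁ j) j from
    this i h hi
  intro n hn
  induction n, hn using Nat.le_induction with
  | base => exact fun _ => le_rfl
  | succ n hin ih =>
    intro hn
    have hdec : aver a (n + 1) j < aver a n j :=
      lt_of_not_ge (mt (aver_le_aver_succ_left_iff (by omega)).1 (hdrop n hin hn).not_ge)
    exact hdec.le.trans (ih (by omega))

theorem aver_le_aver_istar (hk₁ : 1 ≤ k₁)
    (hmono1 : ∀ i, 1 ≤ i → i + 1 ≤ k₁ → a i ≤ a (i + 1)) (hj : k₁ ≤ j) {i : ℕ}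
    (hi : 1 ≤ i) (hik : i ≤ k₁) :
    aver a i j ≤ aver a (istar a k₁ j) j := by
  rcases le_total i (istar a k₁ j) with h | h
  · exact aver_le_aver_istar_of_le hj hi h
  · exact aver_le_aver_istar_of_ge hk₁ hmono1 hj h hik

end LeftBalancePoint

section BalancedAverage

variable {a : ℕ → ℝ} {k₁ j : ℕ}

lemma aver_istar_succ_lt_of_lt (hk₁ : 1 ≤ k₁)
    (hmono1 : ∀ i, 1 ≤ i → i + 1 ≤ k₁ → a i ≤ a (i + 1)) (hj : k₁ ≤ j)
    (h : a (j + 1) < aver a (istar a k₁ j) j) :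
    aver a (istar a k₁ (j + 1)) (j + 1) < aver a (istar a k₁ j) j :=
  aver_succ_right_lt (istar_le.trans hj)
    (aver_le_aver_istar hk₁ hmono1 hj (one_le_istar hk₁) istar_le) h

lemma aver_istar_succ_le_of_le (hk₁ : 1 ≤ k₁)
    (hmono1 : ∀ i, 1 ≤ i → i + 1 ≤ k₁ → a i ≤ a (i + 1)) (hj : k₁ ≤ j)
    (h : aver a (istar a k₁ j) j ≤ a (j + 1)) :
    aver a (istar a k₁ (j + 1)) (j + 1) ≤ a (j + 1) :=
  aver_succ_right_le (istar_le.trans hj)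
    ((aver_le_aver_istar hk₁ hmono1 hj (one_le_istar hk₁) istar_le).trans h) le_rfl

lemma aver_istar_le_aver_istar_succ (hk₁ : 1 ≤ k₁)
    (hmono1 : ∀ i, 1 ≤ i → i + 1 ≤ k₁ → a i ≤ a (i + 1)) (hj : k₁ ≤ j)
    (h : aver a (istar a k₁ j) j ≤ a (j + 1)) :
    aver a (istar a k₁ j) j ≤ aver a (istar a k₁ (j + 1)) (j + 1) :=
  ((aver_le_aver_succ_right_iff (istar_le.trans hj)).2 h).trans
    (aver_le_aver_istar hk₁ hmono1 (Nat.le_succ_of_le hj) (one_le_istar hk₁) istar_le)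

lemma aver_istar_le_succ_of_ge {k₃ : ℕ} (hk₁ : 1 ≤ k₁)
    (hmono1 : ∀ i, 1 ≤ i → i + 1 ≤ k₁ → a i ≤ a (i + 1)) (hj : k₁ ≤ j)
    (hmono : ∀ i, j ≤ i → i + 1 ≤ k₃ → a i ≤ a (i + 1))
    (h : aver a (istar a k₁ j) j ≤ a (j + 1)) {l : ℕ} (hjl : j ≤ l) (hl : l + 1 ≤ k₃) :
    aver a (istar a k₁ l) l ≤ a (l + 1) := by
  induction l, hjl using Nat.le_induction with
  | base => exact h
  | succ l hjl ih =>
    exact (aver_istar_succ_le_of_le hk₁ hmono1 (hj.trans hjl) (ih (by omega))).trans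
      (hmono (l + 1) (by omega) hl)

end BalancedAverage

section RightBalancePoint

variable {a : ℕ → ℝ} {k₁ k₂ k₃ : ℕ}

lemma le_jstar : k₂ ≤ jstar a k₁ k₂ k₃ := by
  unfold jstar
  split_ifs with hne
  · have := (mem_Icc.mp (mem_filter.mp (max'_mem _ hne)).1).1
    omega
  · exact le_rfl

lemma aver_istar_le_of_jstar_le {j : ℕ} (hj : jstar a k₁ k₂ k₃ ≤ j) (hj₃ : j + 1 ≤ k₃) :
    aver a (istar a k₁ j) j ≤ a (j + 1) := by
  by_contra! hlt
  have hmem : j ∈ (Icc k₂ (k₃ - 1)).filter fun j => a (j + 1) < aver a (istar a k₁ j) j :=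
    mem_filter.mpr ⟨mem_Icc.mpr ⟨le_jstar.trans hj, by omega⟩, hlt⟩
  have hne : ((Icc k₂ (k₃ - 1)).filter
      fun j => a (j + 1) < aver a (istar a k₁ j) j).Nonempty := ⟨_, hmem⟩
  rw [jstar, dif_pos hne] at hj
  have := le_max' _ _ hmem
  omega

lemma exists_lt_aver_istar_of_lt_jstar (h : k₂ < jstar a k₁ k₂ k₃) :
    ∃ m, jstar a k₁ k₂ k₃ = m + 1 ∧ m ≤ k₃ - 1 ∧ a (m + 1) < aver a (istar a k₁ m) m := by
  by_cases hne : ((Icc k₂ (k₃ - 1)).filter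
      fun j => a (j + 1) < aver a (istar a k₁ j) j).Nonempty
  · have hmem := mem_filter.mp (max'_mem _ hne)
    exact ⟨_, by rw [jstar, dif_pos hne], (mem_Icc.mp hmem.1).2, hmem.2⟩
  · rw [jstar, dif_neg hne] at h
    exact absurd h (lt_irrefl k₂)

lemma lt_aver_istar_of_lt_jstar (hk₁ : 1 ≤ k₁)
    (hmono1 : ∀ i, 1 ≤ i → i + 1 ≤ k₁ → a i ≤ a (i + 1)) (hk₁₂ : k₁ < k₂)
    (hmono3 : ∀ i, k₂ ≤ i → i + 1 ≤ k₃ → a i ≤ a (i + 1))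
    {j : ℕ} (hj₂ : k₂ ≤ j) (hj : j < jstar a k₁ k₂ k₃) :
    a (j + 1) < aver a (istar a k₁ j) j := by
  obtain ⟨m, hm, hm₃, hlt⟩ := exists_lt_aver_istar_of_lt_jstar (hj₂.trans_lt hj)
  by_contra! hle
  exact hlt.not_ge <| aver_istar_le_succ_of_ge hk₁ hmono1 (by omega)
    (fun i hi => hmono3 i (hj₂.trans hi)) hle (by omega) (by omega)

end RightBalancePoint

theorem statement6_general
    (k₁ k₂ k₃ : ℕ) (a : ℕ → ℝ)
    (hk₁ : 1 ≤ k₁) (hk₁₂ : k₁ < k₂)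
    (hmono1 : ∀ i, 1 ≤ i → i + 1 ≤ k₁ → a i ≤ a (i + 1))
    (hmono3 : ∀ i, k₂ ≤ i → i + 1 ≤ k₃ → a i ≤ a (i + 1)) :
    (∀ j, k₂ ≤ j → j < jstar a k₁ k₂ k₃ →
      aver a (istar a k₁ (j + 1)) (j + 1) < aver a (istar a k₁ j) j) ∧
    (∀ j, jstar a k₁ k₂ k₃ ≤ j → j + 1 ≤ k₃ →
      aver a (istar a k₁ j) j ≤ a (j + 1)) ∧
    (∀ j, jstar a k₁ k₂ k₃ ≤ j → j + 1 ≤ k₃ →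
      aver a (istar a k₁ j) j ≤ aver a (istar a k₁ (j + 1)) (j + 1)) := by
  refine ⟨fun j hj₂ hj => ?_, fun j hj hj₃ => aver_istar_le_of_jstar_le hj hj₃,
    fun j hj hj₃ => ?_⟩
  · exact aver_istar_succ_lt_of_lt hk₁ hmono1 (by omega)
      (lt_aver_istar_of_lt_jstar hk₁ hmono1 hk₁₂ hmono3 hj₂ hj)
  · have hk₁j : k₁ ≤ j := (hk₁₂.trans_le (le_jstar.trans hj)).le
    exact aver_istar_le_aver_istar_succ hk₁ hmono1 hk₁j (aver_istar_le_of_jstar_le hj hj₃)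

theorem statement6
    (p k₁ k₂ k₃ : ℕ) (a : ℕ → ℝ)
    (hk₁ : 1 ≤ k₁) (hk₁₂ : k₁ < k₂) (hk₂₃ : k₂ ≤ k₃) (hk₃p : k₃ ≤ p)
    (hmono1 : ∀ i, 1 ≤ i → i + 1 ≤ k₁ → a i ≤ a (i + 1))
    (hdec : ∀ i, k₁ ≤ i → i + 1 ≤ k₂ → a (i + 1) < a i)
    (hmono3 : ∀ i, k₂ ≤ i → i + 1 ≤ k₃ → a i ≤ a (i + 1)) :
    (∀ j, k₂ ≤ j → j < jstar a k₁ k₂ k₃ →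
      aver a (istar a k₁ (j + 1)) (j + 1) < aver a (istar a k₁ j) j) ∧
    (∀ j, jstar a k₁ k₂ k₃ ≤ j → j + 1 ≤ k₃ →
      aver a (istar a k₁ j) j ≤ a (j + 1)) ∧
    (∀ j, jstar a k₁ k₂ k₃ ≤ j → j + 1 ≤ k₃ →
      aver a (istar a k₁ j) j ≤ aver a (istar a k₁ (j + 1)) (j + 1)) :=
  statement6_general k₁ k₂ k₃ a hk₁ hk₁₂ hmono1 hmono3
end

section
/- In the continuous balance-point setting, assume in addition that G is continuous on [0, b₁) and on I₃. Then for every w ∈ I₃ and every ε > 0: |T(v*_{R,ε}(w), w; G) − T(v*(w), w; G)| ≤ ε and |T(v*_{L,ε}(w), w; G) − T(v*(w), w; G)| ≤ ε. -/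
open MeasureTheory Set Filter Topology

/-- `I_T = I₁ ∪ I₂ ∪ I₃ = (0,b₁) ∪ [b₁,b₂] ∪ (b₂,b₃)`, where `b₃` may be `+∞`. -/
def ITset (b₁ b₂ : ℝ) (b₃ : EReal) : Set ℝ :=
  Ioo 0 b₁ ∪ Icc b₁ b₂ ∪ {y : ℝ | b₂ < y ∧ (y : EReal) < b₃}

/-- The conditioning set `[v,w] ∩ (I_T ∪ {0})` (with possibly infinite right endpoint). -/
def condSet (b₁ b₂ : ℝ) (b₃ : EReal) (v : ℝ) (w : EReal) : Set ℝ :=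
  {y : ℝ | v ≤ y ∧ (y : EReal) ≤ w} ∩ (ITset b₁ b₂ b₃ ∪ {0})

/-- The conditional expectation `T(v,w;G) = E[G(Y) | Y ∈ [v,w] ∩ (I_T ∪ {0})]`,
where `μ` is the law of `Y`. -/
noncomputable def condT (b₁ b₂ : ℝ) (b₃ : EReal) (G : ℝ → ℝ) (μ : Measure ℝ)
    (v : ℝ) (w : EReal) : ℝ :=
  (∫ y in condSet b₁ b₂ b₃ v w, G y ∂μ) / (μ (condSet b₁ b₂ b₃ v w)).toReal

/-- `V_{R,ε}(w) = {v ∈ I₁ : T(v,w;G) < G(v⁻) − ε}`. -/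
noncomputable def VR (b₁ b₂ : ℝ) (b₃ : EReal) (G : ℝ → ℝ) (μ : Measure ℝ)
    (ε : ℝ) (w : EReal) : Set ℝ :=
  {v | v ∈ Ioo 0 b₁ ∧ condT b₁ b₂ b₃ G μ v w < Function.leftLim G v - ε}

open Classical in
/-- `v*_{R,ε}(w)`. -/
noncomputable def vstarR (b₁ b₂ : ℝ) (b₃ : EReal) (G : ℝ → ℝ) (μ : Measure ℝ)
    (ε : ℝ) (w : EReal) : ℝ :=
  if (VR b₁ b₂ b₃ G μ ε w).Nonempty then sInf (VR b₁ b₂ b₃ G μ ε w) else b₁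

/-- The left balance point `v*(w) = v*_{R,0}(w)`. -/
noncomputable def vstar (b₁ b₂ : ℝ) (b₃ : EReal) (G : ℝ → ℝ) (μ : Measure ℝ)
    (w : EReal) : ℝ :=
  vstarR b₁ b₂ b₃ G μ 0 w

/-- `W_{L,ε} = {w ∈ I₃ : T(v*(w),w;G) > G(w⁺) + ε}`. -/
noncomputable def WL (b₁ b₂ : ℝ) (b₃ : EReal) (G : ℝ → ℝ) (μ : Measure ℝ)
    (ε : ℝ) : Set ℝ :=
  {w : ℝ | (b₂ < w ∧ (w : EReal) < b₃) ∧
    Function.rightLim G w + ε < condT b₁ b₂ b₃ G μ (vstar b₁ b₂ b₃ G μ w) w}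

open Classical in
/-- `w*_{L,ε}` (an extended real, since `W_{L,ε}` may be unbounded when `b₃ = ∞`). -/
noncomputable def wstarL (b₁ b₂ : ℝ) (b₃ : EReal) (G : ℝ → ℝ) (μ : Measure ℝ)
    (ε : ℝ) : EReal :=
  if (WL b₁ b₂ b₃ G μ ε).Nonempty
  then sSup ((fun x : ℝ => (x : EReal)) '' WL b₁ b₂ b₃ G μ ε)
  else (b₂ : EReal)

/-- The right balance point `w* = w*_{L,0}`. -/
noncomputable def wstar (b₁ b₂ : ℝ) (b₃ : EReal) (G : ℝ → ℝ) (μ : Measure ℝ) : EReal :=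
  wstarL b₁ b₂ b₃ G μ 0

/-- `v* = v*(w*)`. -/
noncomputable def vstarstar (b₁ b₂ : ℝ) (b₃ : EReal) (G : ℝ → ℝ) (μ : Measure ℝ) : ℝ :=
  vstar b₁ b₂ b₃ G μ (wstar b₁ b₂ b₃ G μ)

/-- `V_{L,ε}(w) = {v ∈ I₁ : G(v) < T(v*(w),w;G) − ε}`. -/
noncomputable def VL (b₁ b₂ : ℝ) (b₃ : EReal) (G : ℝ → ℝ) (μ : Measure ℝ)
    (ε : ℝ) (w : EReal) : Set ℝ :=
  {v | v ∈ Ioo 0 b₁ ∧ G v < condT b₁ b₂ b₃ G μ (vstar b₁ b₂ b₃ G μ w) w - ε}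

open Classical in
/-- `v*_{L,ε}(w)`. -/
noncomputable def vstarL (b₁ b₂ : ℝ) (b₃ : EReal) (G : ℝ → ℝ) (μ : Measure ℝ)
    (ε : ℝ) (w : EReal) : ℝ :=
  if (VL b₁ b₂ b₃ G μ ε w).Nonempty then sSup (VL b₁ b₂ b₃ G μ ε w) else 0

open scoped ENNReal

/-!
Write `T(v) = T(v,w;G)`. For `v ≤ v'` the conditioning set of `v` is that of `v'` plus a piece
of `[v,v')`, so `T(v)` is a convex combination of `T(v')` and an average of `G` over `[v,v')`:
bounds on `G` over `[v,v')` become bounds on `T(v)` in terms of `T(v')`. Moreover `T` is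
left-continuous, so if no `x < u` satisfies `T(x) < G(x) - δ`, then `G ≤ T(u) + δ` on `[0,u)`.
Since `G` is monotone and continuous on `[0,b₁)`, these two facts place both `T(v*_{R,ε}(w))` and
`T(v*_{L,ε}(w))` in `[T(v*(w)) - ε, T(v*(w))]`.
-/

section SetAverage

variable {α : Type*} [MeasurableSpace α] {μ : Measure α} {f : α → ℝ} {s t : Set α} {c : ℝ}

theorem setAverage_le_max_of_forall_diff_le (hst : s ⊆ t) (hs : MeasurableSet s)
    (ht : MeasurableSet t) (htμ : μ t ≠ ∞) (hf : IntegrableOn f t μ)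
    (h : ∀ x ∈ t \ s, f x ≤ c) : ⨍ x in t, f x ∂μ ≤ max (⨍ x in s, f x ∂μ) c := by
  rcases eq_or_ne (μ (t \ s)) 0 with hnull | hpos
  · have hts : t =ᵐ[μ] s := ae_eq_set.2 ⟨hnull, by simp [sdiff_eq_empty.2 hst]⟩
    exact (setAverage_congr hts).le.trans (le_max_left _ _)
  have hdiffμ : μ (t \ s) ≠ ∞ := ne_top_of_le_ne_top htμ (measure_mono sdiff_subset)
  obtain ⟨x, hx, hdiff⟩ := exists_setAverage_le hpos hdiffμ (hf.mono_set sdiff_subset)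
  have hmix := average_union_mem_segment (μ := μ) (f := f) disjoint_sdiff_right.aedisjoint
    (ht.diff hs).nullMeasurableSet (ne_top_of_le_ne_top htμ (measure_mono hst)) hdiffμ
    (hf.mono_set hst) (hf.mono_set sdiff_subset)
  rw [union_sdiff_cancel hst, segment_eq_uIcc] at hmix
  exact hmix.2.trans (max_le_max le_rfl (hdiff.trans (h x hx)))

theorem min_le_setAverage_of_forall_diff_le (hst : s ⊆ t) (hs : MeasurableSet s)
    (ht : MeasurableSet t) (htμ : μ t ≠ ∞) (hf : IntegrableOn f t μ)
    (h : ∀ x ∈ t \ s, c ≤ f x) : min (⨍ x in s, f x ∂μ) c ≤ ⨍ x in t, f x ∂μ := by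
  have hneg := setAverage_le_max_of_forall_diff_le (f := fun x => -f x) (c := -c) hst hs ht htμ
    hf.neg fun x hx => neg_le_neg (h x hx)
  rwa [average_neg, average_neg, max_neg_neg, neg_le_neg_iff] at hneg

theorem tendsto_setIntegral_of_eventually_mem_iff {ι : Type*} {l : Filter ι}
    [l.IsCountablyGenerated] {s : ι → Set α} (hs : ∀ i, MeasurableSet (s i))
    (ht : MeasurableSet t) (hf : Integrable f μ) (hlim : ∀ x, ∀ᶠ i in l, x ∈ s i ↔ x ∈ t) :
    Tendsto (fun i => ∫ x in s i, f x ∂μ) l (𝓝 (∫ x in t, f x ∂μ)) := by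
  simp_rw [← integral_indicator (hs _), ← integral_indicator ht]
  refine tendsto_integral_filter_of_dominated_convergence (fun x => ‖f x‖)
    (Eventually.of_forall fun i => (hf.indicator (hs i)).aestronglyMeasurable)
    (Eventually.of_forall fun i => Eventually.of_forall fun x => norm_indicator_le_norm_self _ _)
    hf.norm (Eventually.of_forall fun x => tendsto_const_nhds.congr' ?_)
  filter_upwards [hlim x] with i hi
  by_cases hx : x ∈ t <;> simp [hx, hi]

theorem tendsto_setAverage_of_eventually_mem_iff [IsFiniteMeasure μ] {ι : Type*} {l : Filter ι}
    [l.IsCountablyGenerated] {s : ι → Set α} (hs : ∀ i, MeasurableSet (s i))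
    (ht : MeasurableSet t) (htμ : μ t ≠ 0) (hf : Integrable f μ)
    (hlim : ∀ x, ∀ᶠ i in l, x ∈ s i ↔ x ∈ t) :
    Tendsto (fun i => ⨍ x in s i, f x ∂μ) l (𝓝 (⨍ x in t, f x ∂μ)) := by
  have hmeas := tendsto_setIntegral_of_eventually_mem_iff hs ht
    (integrable_const (μ := μ) (1 : ℝ)) hlim
  simp only [setIntegral_const, smul_eq_mul, mul_one] at hmeas
  simp_rw [setAverage_eq, smul_eq_mul]
  exact (hmeas.inv₀ ((measureReal_ne_zero_iff (measure_ne_top _ _)).2 htμ)).mul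
    (tendsto_setIntegral_of_eventually_mem_iff hs ht hf hlim)

end SetAverage

theorem monotoneOn_Ico_of_monotoneOn_Ioo {f : ℝ → ℝ} {a b : ℝ} (hf : MonotoneOn f (Ioo a b))
    (hfc : ContinuousOn f (Ico a b)) : MonotoneOn f (Ico a b) := by
  rcases lt_or_ge a b with hab | hba
  · rw [← Ioo_insert_left hab]
    refine hf.insert_of_continuousWithinAt ?_
      ((hfc a (left_mem_Ico.2 hab)).mono Ioo_subset_Ico_self)
    rw [← mem_closure_iff_clusterPt, closure_Ioo hab.ne]
    exact left_mem_Icc.2 hab.le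
  · rw [Ico_eq_empty hba.not_gt]
    exact fun _ h => h.elim

theorem le_of_forall_Ioo_le {f : ℝ → ℝ} {a b c : ℝ} (hab : a < b)
    (hf : ContinuousWithinAt f (Ioo a b) a) (h : ∀ x ∈ Ioo a b, c ≤ f x) : c ≤ f a :=
  continuousWithinAt_const.closure_le (by rw [closure_Ioo hab.ne]; exact left_mem_Icc.2 hab.le)
    hf h

section ConditioningSet

variable {b₁ b₂ : ℝ} {b₃ : EReal} {G : ℝ → ℝ} {μ : Measure ℝ} {v v' u : ℝ} {w : EReal}

theorem measurableSet_condSet (v : ℝ) (w : EReal) : MeasurableSet (condSet b₁ b₂ b₃ v w) := by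
  have hI₃ : MeasurableSet {y : ℝ | b₂ < y ∧ (y : EReal) < b₃} :=
    measurableSet_Ioi.inter (continuous_coe_real_ereal.measurable measurableSet_Iio)
  exact (measurableSet_Ici.inter (continuous_coe_real_ereal.measurable measurableSet_Iic)).inter
    (((measurableSet_Ioo.union measurableSet_Icc).union hI₃).union (measurableSet_singleton 0))

theorem condSet_antitone : Antitone fun v => condSet b₁ b₂ b₃ v w :=
  fun _ _ hvv' _ hy => ⟨⟨hvv'.trans hy.1.1, hy.1.2⟩, hy.2⟩

theorem condSet_diff_subset_Ico : condSet b₁ b₂ b₃ v w \ condSet b₁ b₂ b₃ v' w ⊆ Ico v v' :=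
  fun _ ⟨⟨⟨hvy, hyw⟩, hy⟩, hy'⟩ => ⟨hvy, lt_of_not_ge fun hv'y => hy' ⟨⟨hv'y, hyw⟩, hy⟩⟩

theorem Ioo_subset_condSet (hv : v ≤ b₁) (hw : (b₂ : EReal) ≤ w) :
    Ioo b₁ b₂ ⊆ condSet b₁ b₂ b₃ v w :=
  fun _ hy => ⟨⟨hv.trans hy.1.le, (EReal.coe_le_coe_iff.2 hy.2.le).trans hw⟩,
    Or.inl (Or.inl (Or.inr ⟨hy.1.le, hy.2.le⟩))⟩

theorem eventually_mem_condSet_iff (u y : ℝ) :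
    ∀ᶠ v in 𝓝[<] u, y ∈ condSet b₁ b₂ b₃ v w ↔ y ∈ condSet b₁ b₂ b₃ u w := by
  rcases le_or_gt u y with huy | hyu
  · filter_upwards [self_mem_nhdsWithin] with v hv
    exact and_congr_left' (and_congr_left' (iff_of_true (hv.le.trans huy) huy))
  · filter_upwards [Ioo_mem_nhdsLT hyu] with v hv
    exact iff_of_false (fun hy => hv.1.not_ge hy.1.1) (fun hy => hyu.not_ge hy.1.1)

theorem condT_eq_setAverage (v : ℝ) (w : EReal) :
    condT b₁ b₂ b₃ G μ v w = ⨍ y in condSet b₁ b₂ b₃ v w, G y ∂μ := by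
  rw [condT, setAverage_eq, smul_eq_mul, measureReal_def, inv_mul_eq_div]

variable [IsFiniteMeasure μ]

theorem condT_le_max_of_forall_Ico_le (hG : Integrable G μ) (hvv' : v ≤ v') {c : ℝ}
    (h : ∀ y ∈ Ico v v', G y ≤ c) :
    condT b₁ b₂ b₃ G μ v w ≤ max (condT b₁ b₂ b₃ G μ v' w) c := by
  simp only [condT_eq_setAverage]
  exact setAverage_le_max_of_forall_diff_le (condSet_antitone hvv') (measurableSet_condSet _ _)
    (measurableSet_condSet _ _) (measure_ne_top _ _) hG.integrableOn
    fun y hy => h y (condSet_diff_subset_Ico hy)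

theorem min_le_condT_of_forall_Ico_le (hG : Integrable G μ) (hvv' : v ≤ v') {c : ℝ}
    (h : ∀ y ∈ Ico v v', c ≤ G y) :
    min (condT b₁ b₂ b₃ G μ v' w) c ≤ condT b₁ b₂ b₃ G μ v w := by
  simp only [condT_eq_setAverage]
  exact min_le_setAverage_of_forall_diff_le (condSet_antitone hvv') (measurableSet_condSet _ _)
    (measurableSet_condSet _ _) (measure_ne_top _ _) hG.integrableOn
    fun y hy => h y (condSet_diff_subset_Ico hy)

theorem tendsto_condT_nhdsLT (hG : Integrable G μ) (hu : μ (condSet b₁ b₂ b₃ u w) ≠ 0) :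
    Tendsto (fun v => condT b₁ b₂ b₃ G μ v w) (𝓝[<] u) (𝓝 (condT b₁ b₂ b₃ G μ u w)) := by
  simp only [condT_eq_setAverage]
  exact tendsto_setAverage_of_eventually_mem_iff (fun _ => measurableSet_condSet _ _)
    (measurableSet_condSet _ _) hu hG (eventually_mem_condSet_iff u)

theorem le_condT_add_of_forall_sub_le (hG : Integrable G μ) (hGm : MonotoneOn G (Ico 0 u))
    (hu : μ (condSet b₁ b₂ b₃ u w) ≠ 0) {δ : ℝ}
    (h : ∀ x ∈ Ioo 0 u, G x - δ ≤ condT b₁ b₂ b₃ G μ x w) {y : ℝ} (hy : y ∈ Ico 0 u) :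
    G y ≤ condT b₁ b₂ b₃ G μ u w + δ := by
  have hnear : ∀ᶠ x in 𝓝[<] u, G y - δ ≤ condT b₁ b₂ b₃ G μ x w := by
    filter_upwards [Ioo_mem_nhdsLT hy.2] with x hx
    have hGyx : G y ≤ G x := hGm hy ⟨hy.1.trans hx.1.le, hx.2⟩ hx.1.le
    linarith [h x ⟨hy.1.trans_lt hx.1, hx.2⟩]
  linarith [ge_of_tendsto (tendsto_condT_nhdsLT hG hu) hnear]

/-- `T(v)` mixes `T(u)` with values of `G` on `[v,u)`, all of which are `≥ G v`. -/
theorem condT_lt_apply_of_condT_lt_apply (hG : Integrable G μ) (hGm : MonotoneOn G (Ico 0 b₁))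
    (hv : 0 ≤ v) (hvu : v ≤ u) (hu : u ≤ b₁) (hTv : condT b₁ b₂ b₃ G μ v w < G v) :
    condT b₁ b₂ b₃ G μ u w < G v := by
  have hmix : min (condT b₁ b₂ b₃ G μ u w) (G v) ≤ condT b₁ b₂ b₃ G μ v w :=
    min_le_condT_of_forall_Ico_le hG hvu fun y hy =>
      hGm ⟨hv, hy.1.trans_lt (hy.2.trans_le hu)⟩ ⟨hv.trans hy.1, hy.2.trans_le hu⟩ hy.1
  rcases min_le_iff.1 hmix with h | h <;> linarith

end ConditioningSet

section BalancePoints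

variable {b₁ b₂ : ℝ} {b₃ : EReal} {G : ℝ → ℝ} {μ : Measure ℝ} {w : EReal} {ε ε' x y : ℝ}

theorem measure_condSet_ne_zero (hμ : μ (Ioo b₁ b₂) ≠ 0) (hw : (b₂ : EReal) ≤ w) {v : ℝ}
    (hv : v ≤ b₁) : μ (condSet b₁ b₂ b₃ v w) ≠ 0 :=
  fun h0 => hμ (measure_mono_null (Ioo_subset_condSet hv hw) h0)

theorem mem_VR_iff (hGc : ContinuousOn G (Ico 0 b₁)) {v : ℝ} :
    v ∈ VR b₁ b₂ b₃ G μ ε w ↔ v ∈ Ioo 0 b₁ ∧ condT b₁ b₂ b₃ G μ v w < G v - ε :=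
  and_congr_right fun hv => by
    rw [(hGc.continuousAt (Ico_mem_nhds hv.1 hv.2)).continuousWithinAt.leftLim_eq]

theorem vstarR_le : vstarR b₁ b₂ b₃ G μ ε w ≤ b₁ := by
  unfold vstarR
  split_ifs with h
  · obtain ⟨z, hz⟩ := h
    exact (csInf_le ⟨0, fun _ hv => hv.1.1.le⟩ hz).trans hz.1.2.le
  · exact le_rfl

theorem vstarR_nonneg (hb₁ : 0 ≤ b₁) : 0 ≤ vstarR b₁ b₂ b₃ G μ ε w := by
  unfold vstarR
  split_ifs with h
  · exact le_csInf h fun _ hv => hv.1.1.le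
  · exact hb₁

theorem vstarR_mono (hεε' : ε ≤ ε') : vstarR b₁ b₂ b₃ G μ ε w ≤ vstarR b₁ b₂ b₃ G μ ε' w := by
  have hsub : VR b₁ b₂ b₃ G μ ε' w ⊆ VR b₁ b₂ b₃ G μ ε w :=
    fun v hv => ⟨hv.1, hv.2.trans_le (by linarith)⟩
  by_cases h' : (VR b₁ b₂ b₃ G μ ε' w).Nonempty
  · rw [vstarR, vstarR, if_pos h', if_pos (h'.mono hsub)]
    exact csInf_le_csInf ⟨0, fun _ hv => hv.1.1.le⟩ h' hsub
  · exact vstarR_le.trans_eq (if_neg h').symm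

theorem notMem_VR_of_lt_vstarR (hx : x < vstarR b₁ b₂ b₃ G μ ε w) :
    x ∉ VR b₁ b₂ b₃ G μ ε w := fun hmem =>
  hx.not_ge (by rw [vstarR, if_pos ⟨x, hmem⟩]; exact csInf_le ⟨0, fun _ hv => hv.1.1.le⟩ hmem)

theorem exists_mem_VR_lt_of_vstarR_lt (hx : vstarR b₁ b₂ b₃ G μ ε w < x) (hxb : x ≤ b₁) :
    ∃ v ∈ VR b₁ b₂ b₃ G μ ε w, v < x := by
  by_cases h : (VR b₁ b₂ b₃ G μ ε w).Nonempty
  · rw [vstarR, if_pos h] at hx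
    exact exists_lt_of_csInf_lt h hx
  · rw [vstarR, if_neg h] at hx
    exact absurd hxb hx.not_ge

theorem vstarL_nonneg : 0 ≤ vstarL b₁ b₂ b₃ G μ ε w := by
  unfold vstarL
  split_ifs with h
  · obtain ⟨z, hz⟩ := h
    exact hz.1.1.le.trans (le_csSup ⟨b₁, fun _ hv => hv.1.2.le⟩ hz)
  · exact le_rfl

theorem vstarL_le (hb₁ : 0 ≤ b₁) : vstarL b₁ b₂ b₃ G μ ε w ≤ b₁ := by
  unfold vstarL
  split_ifs with h
  · exact csSup_le h fun _ hv => hv.1.2.le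
  · exact hb₁

theorem apply_lt_of_mem_Ico_vstarL (hGm : MonotoneOn G (Ico 0 b₁))
    (hy : y ∈ Ico 0 (vstarL b₁ b₂ b₃ G μ ε w)) :
    G y < condT b₁ b₂ b₃ G μ (vstar b₁ b₂ b₃ G μ w) w - ε := by
  by_cases h : (VL b₁ b₂ b₃ G μ ε w).Nonempty
  · rw [vstarL, if_pos h] at hy
    obtain ⟨v, hv, hyv⟩ := exists_lt_of_lt_csSup h hy.2
    exact (hGm ⟨hy.1, hyv.trans hv.1.2⟩ ⟨hv.1.1.le, hv.1.2⟩ hyv.le).trans_lt hv.2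
  · rw [vstarL, if_neg h] at hy
    exact absurd hy.2 hy.1.not_gt

theorem sub_le_apply_of_vstarL_lt (hx : vstarL b₁ b₂ b₃ G μ ε w < x) (hxb : x < b₁) :
    condT b₁ b₂ b₃ G μ (vstar b₁ b₂ b₃ G μ w) w - ε ≤ G x := by
  have hxVL : x ∉ VL b₁ b₂ b₃ G μ ε w := fun hmem => hx.not_ge (by
    rw [vstarL, if_pos ⟨x, hmem⟩]
    exact le_csSup ⟨b₁, fun _ hv => hv.1.2.le⟩ hmem)
  exact not_lt.1 fun hlt => hxVL ⟨⟨vstarL_nonneg.trans_lt hx, hxb⟩, hlt⟩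

variable [IsFiniteMeasure μ]

theorem le_condT_vstarR_add (hG : Integrable G μ) (hGm : MonotoneOn G (Ico 0 b₁))
    (hGc : ContinuousOn G (Ico 0 b₁)) (hS : ∀ v ≤ b₁, μ (condSet b₁ b₂ b₃ v w) ≠ 0)
    (hy : y ∈ Ico 0 (vstarR b₁ b₂ b₃ G μ ε w)) :
    G y ≤ condT b₁ b₂ b₃ G μ (vstarR b₁ b₂ b₃ G μ ε w) w + ε := by
  refine le_condT_add_of_forall_sub_le hG (hGm.mono (Ico_subset_Ico_right vstarR_le))
    (hS _ vstarR_le) (fun x hx => ?_) hy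
  exact not_lt.1 fun hlt => notMem_VR_of_lt_vstarR hx.2
    ((mem_VR_iff hGc).2 ⟨⟨hx.1, hx.2.trans_le vstarR_le⟩, hlt⟩)

theorem le_condT_vstar (hG : Integrable G μ) (hGm : MonotoneOn G (Ico 0 b₁))
    (hGc : ContinuousOn G (Ico 0 b₁)) (hS : ∀ v ≤ b₁, μ (condSet b₁ b₂ b₃ v w) ≠ 0)
    (hy : y ∈ Ico 0 (vstar b₁ b₂ b₃ G μ w)) :
    G y ≤ condT b₁ b₂ b₃ G μ (vstar b₁ b₂ b₃ G μ w) w := by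
  exact (le_condT_vstarR_add (ε := 0) hG hGm hGc hS hy).trans_eq (add_zero _)

theorem condT_lt_of_vstar_lt (hG : Integrable G μ) (hGm : MonotoneOn G (Ico 0 b₁))
    (hGc : ContinuousOn G (Ico 0 b₁)) {u : ℝ} (hx : vstar b₁ b₂ b₃ G μ w < x) (hxu : x < u)
    (hu : u ≤ b₁) : condT b₁ b₂ b₃ G μ u w < G x := by
  obtain ⟨v, hv, hvx⟩ := exists_mem_VR_lt_of_vstarR_lt hx (hxu.le.trans hu)
  rw [mem_VR_iff hGc, sub_zero] at hv
  exact (condT_lt_apply_of_condT_lt_apply hG hGm hv.1.1.le (hvx.le.trans hxu.le) hu hv.2).trans_le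
    (hGm ⟨hv.1.1.le, hv.1.2⟩ ⟨hv.1.1.le.trans hvx.le, hxu.trans_le hu⟩ hvx.le)

theorem abs_condT_vstarR_sub_condT_vstar_le (hb₁ : 0 ≤ b₁) (hG : Integrable G μ)
    (hGm : MonotoneOn G (Ico 0 b₁)) (hGc : ContinuousOn G (Ico 0 b₁))
    (hS : ∀ v ≤ b₁, μ (condSet b₁ b₂ b₃ v w) ≠ 0) (hε : 0 ≤ ε) :
    |condT b₁ b₂ b₃ G μ (vstarR b₁ b₂ b₃ G μ ε w) w
      - condT b₁ b₂ b₃ G μ (vstar b₁ b₂ b₃ G μ w) w| ≤ ε := by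
  set u := vstarR b₁ b₂ b₃ G μ ε w
  set vs := vstar b₁ b₂ b₃ G μ w
  have hvsu : vs ≤ u := vstarR_mono hε
  rcases hvsu.eq_or_lt with heq | hlt
  · rw [heq, sub_self, abs_zero]
    exact hε
  have hvs0 : 0 ≤ vs := vstarR_nonneg hb₁
  have hub : u ≤ b₁ := vstarR_le
  have hupper : condT b₁ b₂ b₃ G μ vs w ≤ condT b₁ b₂ b₃ G μ u w + ε := by
    have hmix : condT b₁ b₂ b₃ G μ vs w
        ≤ max (condT b₁ b₂ b₃ G μ u w) (condT b₁ b₂ b₃ G μ u w + ε) :=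
      condT_le_max_of_forall_Ico_le hG hlt.le fun y hy =>
        le_condT_vstarR_add hG hGm hGc hS ⟨hvs0.trans hy.1, hy.2⟩
    rwa [max_eq_right (by linarith)] at hmix
  have hTu : condT b₁ b₂ b₃ G μ u w ≤ G vs :=
    le_of_forall_Ioo_le hlt ((hGc vs ⟨hvs0, hlt.trans_le hub⟩).mono (Ioo_subset_Ico_self.trans
      (Ico_subset_Ico hvs0 hub)))
      fun x hx => (condT_lt_of_vstar_lt hG hGm hGc hx.1 hx.2 hub).le
  have hlower : condT b₁ b₂ b₃ G μ u w ≤ condT b₁ b₂ b₃ G μ vs w := by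
    have hmix : min (condT b₁ b₂ b₃ G μ u w) (G vs) ≤ condT b₁ b₂ b₃ G μ vs w :=
      min_le_condT_of_forall_Ico_le hG hlt.le fun y hy =>
        hGm ⟨hvs0, hlt.trans_le hub⟩ ⟨hvs0.trans hy.1, hy.2.trans_le hub⟩ hy.1
    rwa [min_eq_left hTu] at hmix
  rw [abs_le]
  constructor <;> linarith


theorem vstarL_le_vstar (hb₁ : 0 ≤ b₁) (hG : Integrable G μ) (hGm : MonotoneOn G (Ico 0 b₁))
    (hGc : ContinuousOn G (Ico 0 b₁)) (hε : 0 < ε) :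
    vstarL b₁ b₂ b₃ G μ ε w ≤ vstar b₁ b₂ b₃ G μ w := by
  set sL := vstarL b₁ b₂ b₃ G μ ε w
  set vs := vstar b₁ b₂ b₃ G μ w
  by_contra! hlt
  obtain ⟨x, hvsx, hxsL⟩ := exists_between hlt
  have hvs0 : 0 ≤ vs := vstarR_nonneg hb₁
  have hTsL : condT b₁ b₂ b₃ G μ sL w < G x :=
    condT_lt_of_vstar_lt hG hGm hGc hvsx hxsL (vstarL_le hb₁)
  have hGx : G x < condT b₁ b₂ b₃ G μ vs w - ε :=
    apply_lt_of_mem_Ico_vstarL hGm ⟨hvs0.trans hvsx.le, hxsL⟩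
  have hmix : condT b₁ b₂ b₃ G μ vs w
      ≤ max (condT b₁ b₂ b₃ G μ sL w) (condT b₁ b₂ b₃ G μ vs w - ε) :=
    condT_le_max_of_forall_Ico_le hG hlt.le fun y hy =>
      (apply_lt_of_mem_Ico_vstarL hGm ⟨hvs0.trans hy.1, hy.2⟩).le
  rcases le_max_iff.1 hmix with h | h <;> linarith

theorem abs_condT_vstarL_sub_condT_vstar_le (hb₁ : 0 ≤ b₁) (hG : Integrable G μ)
    (hGm : MonotoneOn G (Ico 0 b₁)) (hGc : ContinuousOn G (Ico 0 b₁))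
    (hS : ∀ v ≤ b₁, μ (condSet b₁ b₂ b₃ v w) ≠ 0) (hε : 0 < ε) :
    |condT b₁ b₂ b₃ G μ (vstarL b₁ b₂ b₃ G μ ε w) w
      - condT b₁ b₂ b₃ G μ (vstar b₁ b₂ b₃ G μ w) w| ≤ ε := by
  set sL := vstarL b₁ b₂ b₃ G μ ε w
  set vs := vstar b₁ b₂ b₃ G μ w
  have hsLvs : sL ≤ vs := vstarL_le_vstar hb₁ hG hGm hGc hε
  rcases hsLvs.eq_or_lt with heq | hlt
  · rw [heq, sub_self, abs_zero]
    exact hε.le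
  have hsL0 : 0 ≤ sL := vstarL_nonneg
  have hvsb : vs ≤ b₁ := vstarR_le
  have hGsL : condT b₁ b₂ b₃ G μ vs w - ε ≤ G sL :=
    le_of_forall_Ioo_le hlt ((hGc sL ⟨hsL0, hlt.trans_le hvsb⟩).mono (Ioo_subset_Ico_self.trans
      (Ico_subset_Ico hsL0 hvsb)))
      fun x hx => sub_le_apply_of_vstarL_lt hx.1 (hx.2.trans_le hvsb)
  have hupper : condT b₁ b₂ b₃ G μ sL w
      ≤ max (condT b₁ b₂ b₃ G μ vs w) (condT b₁ b₂ b₃ G μ vs w) :=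
    condT_le_max_of_forall_Ico_le hG hlt.le fun y hy =>
      le_condT_vstar hG hGm hGc hS ⟨hsL0.trans hy.1, hy.2⟩
  have hlower : min (condT b₁ b₂ b₃ G μ vs w) (condT b₁ b₂ b₃ G μ vs w - ε)
      ≤ condT b₁ b₂ b₃ G μ sL w :=
    min_le_condT_of_forall_Ico_le hG hlt.le fun y hy =>
      hGsL.trans (hGm ⟨hsL0, hlt.trans_le hvsb⟩ ⟨hsL0.trans hy.1, hy.2.trans_le hvsb⟩ hy.1)
  rw [max_self] at hupper
  rw [min_eq_right (by linarith)] at hlower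
  rw [abs_le]
  constructor <;> linarith

end BalancePoints

theorem statement12_general
    (b₁ b₂ : ℝ) (b₃ : EReal) (G : ℝ → ℝ) (μ : Measure ℝ)
    (hb₁ : 0 ≤ b₁) (hb₁₂ : b₁ < b₂)
    (hμ : IsProbabilityMeasure μ)
    (hGint : Integrable G μ)
    (hfull : ∀ a b : ℝ, a < b → Ioo a b ⊆ ITset b₁ b₂ b₃ → 0 < μ (Ioo a b))
    (hG1 : MonotoneOn G (Ioo 0 b₁))
    (hGc1 : ContinuousOn G (Ico 0 b₁)) :
    ∀ w : ℝ, b₂ < w → (w : EReal) < b₃ → ∀ ε : ℝ, 0 < ε →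
      |condT b₁ b₂ b₃ G μ (vstarR b₁ b₂ b₃ G μ ε (w : EReal)) (w : EReal)
        - condT b₁ b₂ b₃ G μ (vstar b₁ b₂ b₃ G μ (w : EReal)) (w : EReal)| ≤ ε ∧
      |condT b₁ b₂ b₃ G μ (vstarL b₁ b₂ b₃ G μ ε (w : EReal)) (w : EReal)
        - condT b₁ b₂ b₃ G μ (vstar b₁ b₂ b₃ G μ (w : EReal)) (w : EReal)| ≤ ε := by
  intro w hw _ ε hε
  have hGm : MonotoneOn G (Ico 0 b₁) := monotoneOn_Ico_of_monotoneOn_Ioo hG1 hGc1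
  have hμI : μ (Ioo b₁ b₂) ≠ 0 :=
    (hfull b₁ b₂ hb₁₂ fun y hy => Or.inl (Or.inr ⟨hy.1.le, hy.2.le⟩)).ne'
  have hS : ∀ v ≤ b₁, μ (condSet b₁ b₂ b₃ v w) ≠ 0 :=
    fun v => measure_condSet_ne_zero hμI (EReal.coe_le_coe_iff.2 hw.le)
  exact ⟨abs_condT_vstarR_sub_condT_vstar_le hb₁ hGint hGm hGc1 hS hε.le,
    abs_condT_vstarL_sub_condT_vstar_le hb₁ hGint hGm hGc1 hS hε⟩

theorem statement12
    (b₁ b₂ : ℝ) (b₃ : EReal) (G : ℝ → ℝ) (μ : Measure ℝ)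
    (hb₁ : 0 ≤ b₁) (hb₁₂ : b₁ < b₂) (hb₂₃ : (b₂ : EReal) < b₃)
    (hμ : IsProbabilityMeasure μ) (hμneg : μ (Iio 0) = 0)
    (hGint : Integrable G μ)
    (hfull : ∀ a b : ℝ, a < b → Ioo a b ⊆ ITset b₁ b₂ b₃ → 0 < μ (Ioo a b))
    (hG1 : MonotoneOn G (Ioo 0 b₁))
    (hG2 : StrictAntiOn G (Icc b₁ b₂))
    (hG3 : MonotoneOn G {y : ℝ | b₂ < y ∧ (y : EReal) < b₃})
    (hGc1 : ContinuousOn G (Ico 0 b₁))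
    (hGc3 : ContinuousOn G {y : ℝ | b₂ < y ∧ (y : EReal) < b₃}) :
    ∀ w : ℝ, b₂ < w → (w : EReal) < b₃ → ∀ ε : ℝ, 0 < ε →
      |condT b₁ b₂ b₃ G μ (vstarR b₁ b₂ b₃ G μ ε (w : EReal)) (w : EReal)
        - condT b₁ b₂ b₃ G μ (vstar b₁ b₂ b₃ G μ (w : EReal)) (w : EReal)| ≤ ε ∧
      |condT b₁ b₂ b₃ G μ (vstarL b₁ b₂ b₃ G μ ε (w : EReal)) (w : EReal)
        - condT b₁ b₂ b₃ G μ (vstar b₁ b₂ b₃ G μ (w : EReal)) (w : EReal)| ≤ ε :=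
  statement12_general b₁ b₂ b₃ G μ hb₁ hb₁₂ hμ hGint hfull hG1 hGc1
end
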